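/- Let (E_t, β_{s,t})_{s,t∈ℚ_{>0}} be a rational-time subproduct system of two-dimensional Hilbert spaces with vectors x_t, y_t ∈ E_t satisfying Condition (4) (‖x_t‖=‖y_t‖=1, ⟨x_t,y_t⟩=0, β_{s,t}(x_{s+t})=x_s⊗x_t, β_{s,t}(y_{s+t})=y_s⊗x_t for all s,t ∈ ℚ_{>0}) or Condition (5) (the same with β_{s,t}(y_{s+t})=x_s⊗y_t instead). Then for h = y_1 one has ‖h‖ = 1 while ⟨β_{t,1−t}(h), ξ_{1−t,t}(β_{1−t,t}(h))⟩ = 0 for every t ∈ ℚ ∩ (0,1); consequently the function on ℚ ∩ [0,1] equal to ⟨β_{t,1−t}(h), ξ_{1−t,t}(β_{1−t,t}(h))⟩ for t ∈ ℚ ∩ (0,1) and equal to ‖h‖² at t ∈ {0,1} is not uniformly continuous. -/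

import Mathlib

noncomputable section

open scoped TensorProduct ComplexConjugate

namespace SubprodHilbert

section TensorConstruction


variable {E F : Type*} [NormedAddCommGroup E] [InnerProductSpace ℂ E]
  [NormedAddCommGroup F] [InnerProductSpace ℂ F]

local notation "⟪" x ", " y "⟫" => @inner ℂ _ _ x y

/-- For fixed `u, v`, the ℂ-bilinear functional `(u', v') ↦ ⟪u,u'⟫ ⟪v,v'⟫`. -/
def innerAux (u : E) (v : F) : E →ₗ[ℂ] F →ₗ[ℂ] ℂ :=
  LinearMap.mk₂ ℂ (fun u' v' => ⟪u, u'⟫ * ⟪v, v'⟫)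
    (fun m₁ m₂ n => by simp [inner_add_right]; ring)
    (fun c m n => by simp [inner_smul_right]; ring)
    (fun m n₁ n₂ => by simp [inner_add_right]; ring)
    (fun c m n => by simp [inner_smul_right]; ring)

@[simp] lemma innerAux_apply (u u' : E) (v v' : F) :
    innerAux u v u' v' = ⟪u, u'⟫ * ⟪v, v'⟫ := rfl

/-- The (conjugate-linear-in-the-first-variable) map sending `z : E ⊗ F` to the linear
functional `w ↦ ⟪z, w⟫`. -/
def innerFunc : E ⊗[ℂ] F →+ (E ⊗[ℂ] F →ₗ[ℂ] ℂ) :=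
  TensorProduct.liftAddHom
    (AddMonoidHom.mk'
      (fun u => AddMonoidHom.mk' (fun v => TensorProduct.lift (innerAux u v))
        (fun v₁ v₂ => by
          apply TensorProduct.ext'
          intro u' v'
          simp [inner_add_left]
          ring))
      (fun u₁ u₂ => by
        ext v : 1
        apply TensorProduct.ext'
        intro u' v'
        simp [inner_add_left]
        ring))
    (fun c u v => by
      apply TensorProduct.ext'
      intro u' v'
      simp [inner_smul_left]
      ring)

@[simp] lemma innerFunc_tmul (u u' : E) (v v' : F) :
    innerFunc (u ⊗ₜ[ℂ] v) (u' ⊗ₜ[ℂ] v') = ⟪u, u'⟫ * ⟪v, v'⟫ := rfl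

lemma innerFunc_smul (c : ℂ) (z : E ⊗[ℂ] F) :
    innerFunc (c • z) = conj c • innerFunc z := by
  induction z using TensorProduct.induction_on with
  | zero => simp
  | tmul u v =>
      rw [TensorProduct.smul_tmul']
      apply TensorProduct.ext'
      intro u' v'
      simp [inner_smul_left]
      ring
  | add z₁ z₂ h₁ h₂ => rw [smul_add, map_add, map_add, h₁, h₂, smul_add]

lemma innerFunc_conj_symm (z w : E ⊗[ℂ] F) :
    conj (innerFunc w z) = innerFunc z w := by
  induction z using TensorProduct.induction_on with
  | zero => simp
  | tmul u v =>
      induction w using TensorProduct.induction_on with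
      | zero => simp
      | tmul u' v' =>
          simp only [innerFunc_tmul, map_mul, inner_conj_symm]
      | add w₁ w₂ h₁ h₂ => simp [map_add, h₁, h₂]
  | add z₁ z₂ h₁ h₂ => simp [map_add, h₁, h₂]

lemma exists_orthonormal_rep (z : E ⊗[ℂ] F) :
    ∃ (n : ℕ) (e : Fin n → E) (w : Fin n → F),
      Orthonormal ℂ e ∧ z = ∑ i, e i ⊗ₜ[ℂ] w i := by
  obtain ⟨S, rfl⟩ := TensorProduct.exists_finset z
  set U : Submodule ℂ E := Submodule.span ℂ (Prod.fst '' (S : Set (E × F))) with hU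
  haveI : FiniteDimensional ℂ U :=
    FiniteDimensional.span_of_finite ℂ (S.finite_toSet.image _)
  let b : OrthonormalBasis (Fin (Module.finrank ℂ U)) ℂ U := stdOrthonormalBasis ℂ U
  have hone : Orthonormal ℂ (fun i => (b i : E)) := by
    have hb := b.orthonormal
    constructor
    · intro i; simpa [norm] using hb.1 i
    · intro i j hij; simpa [Submodule.coe_inner] using hb.2 hij
  refine ⟨_, fun i => (b i : E), fun i => ∑ p ∈ S, ⟪(b i : E), p.1⟫ • p.2, hone, ?_⟩
  have key : ∀ p ∈ S, p.1 ⊗ₜ[ℂ] p.2 = ∑ i, ⟪(b i : E), p.1⟫ • ((b i : E) ⊗ₜ[ℂ] p.2) := by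
    intro p hp
    have hmem : p.1 ∈ U := Submodule.subset_span ⟨p, hp, rfl⟩
    have hrep : ((∑ i, (⟪b i, (⟨p.1, hmem⟩ : U)⟫ : ℂ) • b i : U) : E) = p.1 := by
      rw [b.sum_repr' ⟨p.1, hmem⟩]
    have h2 : ∀ i, (⟪b i, (⟨p.1, hmem⟩ : U)⟫ : ℂ) = ⟪(b i : E), p.1⟫ := fun i =>
      Submodule.coe_inner U (b i) ⟨p.1, hmem⟩
    have hrep' : p.1 = ∑ i, ⟪(b i : E), p.1⟫ • (b i : E) := by
      calc p.1 = ((∑ i, (⟪b i, (⟨p.1, hmem⟩ : U)⟫ : ℂ) • b i : U) : E) := hrep.symm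
        _ = ∑ i, (⟪b i, (⟨p.1, hmem⟩ : U)⟫ : ℂ) • (b i : E) := by push_cast; rfl
        _ = ∑ i, ⟪(b i : E), p.1⟫ • (b i : E) := Finset.sum_congr rfl fun i _ => by rw [h2]
    calc p.1 ⊗ₜ[ℂ] p.2 = (∑ i, ⟪(b i : E), p.1⟫ • (b i : E)) ⊗ₜ[ℂ] p.2 := by rw [← hrep']
      _ = ∑ i, ⟪(b i : E), p.1⟫ • ((b i : E) ⊗ₜ[ℂ] p.2) := by
          rw [TensorProduct.sum_tmul]
          refine Finset.sum_congr rfl fun i _ => ?_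
          rw [TensorProduct.smul_tmul']
  calc ∑ p ∈ S, p.1 ⊗ₜ[ℂ] p.2
      = ∑ p ∈ S, ∑ i, ⟪(b i : E), p.1⟫ • ((b i : E) ⊗ₜ[ℂ] p.2) :=
        Finset.sum_congr rfl key
    _ = ∑ i, ∑ p ∈ S, ⟪(b i : E), p.1⟫ • ((b i : E) ⊗ₜ[ℂ] p.2) := Finset.sum_comm
    _ = ∑ i, (b i : E) ⊗ₜ[ℂ] (∑ p ∈ S, ⟪(b i : E), p.1⟫ • p.2) := by
        refine Finset.sum_congr rfl fun i _ => ?_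
        rw [TensorProduct.tmul_sum]
        refine Finset.sum_congr rfl fun p _ => ?_
        rw [TensorProduct.tmul_smul]

lemma innerFunc_self (n : ℕ) (e : Fin n → E) (w : Fin n → F) (he : Orthonormal ℂ e) :
    innerFunc (∑ i, e i ⊗ₜ[ℂ] w i) (∑ i, e i ⊗ₜ[ℂ] w i) = ∑ i, ⟪w i, w i⟫ := by
  have hee : ∀ i j, (⟪e i, e j⟫ : ℂ) = if i = j then 1 else 0 := orthonormal_iff_ite.mp he
  simp only [map_sum, LinearMap.coe_sum, Finset.sum_apply, innerFunc_tmul, hee, ite_mul,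
    one_mul, zero_mul]
  rw [Finset.sum_comm]
  simp

/-- The inner-product-space core on the algebraic tensor product of two complex
inner product spaces, determined by `⟪u ⊗ v, u' ⊗ v'⟫ = ⟪u,u'⟫ ⟪v,v'⟫`. -/
def tensorCore : InnerProductSpace.Core ℂ (E ⊗[ℂ] F) where
  inner z w := innerFunc z w
  conj_inner_symm := innerFunc_conj_symm
  re_inner_nonneg z := by
    show 0 ≤ RCLike.re (innerFunc z z)
    obtain ⟨n, e, w, he, rfl⟩ := exists_orthonormal_rep z
    rw [innerFunc_self n e w he]
    rw [map_sum]
    exact Finset.sum_nonneg fun i _ => inner_self_nonneg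
  add_left z₁ z₂ w := by
    show innerFunc (z₁ + z₂) w = innerFunc z₁ w + innerFunc z₂ w
    rw [map_add]; rfl
  smul_left z w c := by
    show innerFunc (c • z) w = conj c * innerFunc z w
    rw [innerFunc_smul]; rfl
  definite z hz := by
    replace hz : innerFunc z z = 0 := hz
    obtain ⟨n, e, w, he, rfl⟩ := exists_orthonormal_rep z
    rw [innerFunc_self n e w he] at hz
    have hz' : ∑ i, (‖w i‖ ^ 2 : ℝ) = 0 := by
      have := congrArg Complex.re hz
      simpa [← @inner_self_eq_norm_sq ℂ] using this
    have hw : ∀ i ∈ Finset.univ, w i = 0 := by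
      intro i hi
      have h0 : (‖w i‖ ^ 2 : ℝ) = 0 :=
        (Finset.sum_eq_zero_iff_of_nonneg fun j _ => sq_nonneg _).mp hz' i hi
      simpa using h0
    calc ∑ i, e i ⊗ₜ[ℂ] w i = ∑ i : Fin n, (0 : E ⊗[ℂ] F) :=
          Finset.sum_congr rfl fun i hi => by rw [hw i hi, TensorProduct.tmul_zero]
      _ = 0 := Finset.sum_const_zero

instance tensorNormedAddCommGroup : NormedAddCommGroup (E ⊗[ℂ] F) :=
  @InnerProductSpace.Core.toNormedAddCommGroup ℂ _ _ _ _ tensorCore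

instance tensorInnerProductSpace : InnerProductSpace ℂ (E ⊗[ℂ] F) :=
  InnerProductSpace.ofCore tensorCore.toCore

@[simp] lemma inner_tmul (u u' : E) (v v' : F) :
    (inner ℂ (u ⊗ₜ[ℂ] v) (u' ⊗ₜ[ℂ] v') : ℂ) = ⟪u, u'⟫ * ⟪v, v'⟫ := rfl
end TensorConstruction


/-- Cast between the fibers of a family of inner product spaces along an equality of
indices, as a linear isometric isomorphism. -/
def castE {ι : Type*} (E : ι → Type*) [∀ t, NormedAddCommGroup (E t)]
    [∀ t, InnerProductSpace ℂ (E t)] {a b : ι} (h : a = b) : E a ≃ₗᵢ[ℂ] E b := by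
  subst h; exact LinearIsometryEquiv.refl ℂ (E a)


/-- The positive rationals, the time domain of a rational-time subproduct system. -/
abbrev Qpos : Type := {q : ℚ // 0 < q}

section Rational

variable (E : Qpos → Type*)
  [∀ t, NormedAddCommGroup (E t)] [∀ t, InnerProductSpace ℂ (E t)]
variable (β : ∀ s t : Qpos, E (s + t) →ₗᵢ[ℂ] (E s ⊗[ℂ] E t))

/-- The associativity condition in the definition of a rational-time subproduct system. -/
def SubprodAssocQ : Prop :=
  ∀ r s t : Qpos, ∀ u : E (r + s + t),
    (TensorProduct.assoc ℂ (E r) (E s) (E t))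
      (TensorProduct.map (β r s).toLinearMap LinearMap.id (β (r + s) t u))
    = TensorProduct.map LinearMap.id (β s t).toLinearMap
        (β r (s + t) (castE E (add_assoc r s t) u))

/-- Condition (1) of Theorem 3.1, with the parameter `a` explicit:
`(x, y)` behaves like two exponential units at angle `aᵗ`. -/
def Cond1With (a : ℝ) (x y : ∀ t : Qpos, E t) : Prop :=
  (∀ t, ‖x t‖ = 1) ∧ (∀ t, ‖y t‖ = 1) ∧
  (∀ t : Qpos, (inner ℂ (x t) (y t) : ℂ) = ((a ^ ((t : ℚ) : ℝ) : ℝ) : ℂ)) ∧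
  (∀ s t : Qpos, β s t (x (s + t)) = x s ⊗ₜ[ℂ] x t) ∧
  (∀ s t : Qpos, β s t (y (s + t)) = y s ⊗ₜ[ℂ] y t)

/-- Condition (1) of Theorem 3.1: `∃ a ∈ [0,1)` as in `Cond1With`. -/
def Cond1 (x y : ∀ t : Qpos, E t) : Prop :=
  ∃ a : ℝ, 0 ≤ a ∧ a < 1 ∧ Cond1With E β a x y

/-- Condition (3) of Theorem 3.1, with the parameter `c` and the multiplicative
unimodular family `η` explicit. -/
def Cond3With (c : ℝ) (η : Qpos → ℂ) (x y : ∀ t : Qpos, E t) : Prop :=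
  (∀ t, ‖η t‖ = 1) ∧ (∀ s t : Qpos, η (s + t) = η s * η t) ∧
  (∀ t, ‖x t‖ = 1) ∧ (∀ t : Qpos, (inner ℂ (x t) (y t) : ℂ) = 0) ∧
  (∀ t : Qpos, ‖y t‖ ^ 2 =
    if c = 1 then ((t : ℚ) : ℝ) else (c ^ (2 * ((t : ℚ) : ℝ)) - 1) / (c ^ 2 - 1)) ∧
  (∀ s t : Qpos, β s t (x (s + t)) = x s ⊗ₜ[ℂ] x t) ∧
  (∀ s t : Qpos, β s t (y (s + t)) =
    y s ⊗ₜ[ℂ] x t + (((c ^ ((s : ℚ) : ℝ) : ℝ) : ℂ) * η s) • (x s ⊗ₜ[ℂ] y t))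

/-- Condition (3) of Theorem 3.1. -/
def Cond3 (x y : ∀ t : Qpos, E t) : Prop :=
  ∃ c : ℝ, 0 < c ∧ ∃ η : Qpos → ℂ, Cond3With E β c η x y

/-- Condition (4) of Theorem 3.1. -/
def Cond4 (x y : ∀ t : Qpos, E t) : Prop :=
  (∀ t, ‖x t‖ = 1) ∧ (∀ t, ‖y t‖ = 1) ∧
  (∀ t : Qpos, (inner ℂ (x t) (y t) : ℂ) = 0) ∧
  (∀ s t : Qpos, β s t (x (s + t)) = x s ⊗ₜ[ℂ] x t) ∧
  (∀ s t : Qpos, β s t (y (s + t)) = y s ⊗ₜ[ℂ] x t)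

/-- Condition (5) of Theorem 3.1. -/
def Cond5 (x y : ∀ t : Qpos, E t) : Prop :=
  (∀ t, ‖x t‖ = 1) ∧ (∀ t, ‖y t‖ = 1) ∧
  (∀ t : Qpos, (inner ℂ (x t) (y t) : ℂ) = 0) ∧
  (∀ s t : Qpos, β s t (x (s + t)) = x s ⊗ₜ[ℂ] x t) ∧
  (∀ s t : Qpos, β s t (y (s + t)) = x s ⊗ₜ[ℂ] y t)

/-- The function `t ↦ ⟨β_{t,1-t} h, ξ_{1-t,t} β_{1-t,t} h⟩` on `ℚ ∩ (0,1)` (written here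
with the two arguments of the inner product exchanged, to match the convention of Mathlib's
`inner`, which is conjugate-linear in its first argument), extended by `‖h‖²` elsewhere. -/
def flipInnerFn (h : E 1) : ℚ → ℂ := fun t =>
  if ht : 0 < t ∧ t < 1 then
    (inner ℂ
      ((TensorProduct.comm ℂ (E ⟨1 - t, by linarith [ht.2]⟩) (E ⟨t, ht.1⟩))
        (β ⟨1 - t, by linarith [ht.2]⟩ ⟨t, ht.1⟩
          (castE E (by apply Subtype.ext; simp) h)))
      (β ⟨t, ht.1⟩ ⟨1 - t, by linarith [ht.2]⟩
        (castE E (by apply Subtype.ext; simp) h)) : ℂ)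
  else ((‖h‖ : ℂ)) ^ 2

end Rational

/-! Under (4) or (5), `β` splits `y` as a tensor in which exactly one factor is a `y` and the
other an `x`, on the left under (4) and on the right under (5). After the flip `ξ` the `y`
sits in the other slot, so the inner product contains a factor `⟪x, y⟫ = 0`; at the endpoints,
however, the function takes the value `‖y₁‖² = 1`. -/
lemma castE_apply {ι : Type*} (E : ι → Type*) [∀ t, NormedAddCommGroup (E t)]
    [∀ t, InnerProductSpace ℂ (E t)] (y : ∀ t, E t) {a b : ι} (h : a = b) :
    castE E h (y a) = y b := by
  subst h; rfl

lemma not_continuousWithinAt_Icc_of_eqOn_Ioo {α β : Type*} [LinearOrder α] [TopologicalSpace α]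
    [OrderTopology α] [DenselyOrdered α] [TopologicalSpace β] [T2Space β] {f : α → β}
    {a b : α} {c : β} (hab : a < b) (hfa : f a ≠ c) (hf : Set.EqOn f (fun _ => c) (Set.Ioo a b)) :
    ¬ ContinuousWithinAt f (Set.Icc a b) a := by
  intro hcont
  have := left_nhdsWithin_Ioo_neBot hab
  have hlim_fa : Filter.Tendsto f (nhdsWithin a (Set.Ioo a b)) (nhds (f a)) :=
    hcont.mono Set.Ioo_subset_Icc_self
  have hlim_c : Filter.Tendsto f (nhdsWithin a (Set.Ioo a b)) (nhds c) :=
    tendsto_const_nhds.congr' (Filter.eventuallyEq_of_mem self_mem_nhdsWithin hf).symm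
  exact hfa (tendsto_nhds_unique hlim_fa hlim_c)

section Conditions

variable {E : Qpos → Type*} [∀ t, NormedAddCommGroup (E t)] [∀ t, InnerProductSpace ℂ (E t)]
  {β : ∀ s t : Qpos, E (s + t) →ₗᵢ[ℂ] (E s ⊗[ℂ] E t)} {x y : ∀ t : Qpos, E t}

lemma Cond4.inner_comm_split_eq_zero (h : Cond4 E β x y) (s t : Qpos) :
    (inner ℂ ((TensorProduct.comm ℂ (E t) (E s)) (β t s (y (t + s)))) (β s t (y (s + t))) : ℂ)
      = 0 := by
  rw [h.2.2.2.2, h.2.2.2.2, TensorProduct.comm_tmul, inner_tmul, h.2.2.1 s, zero_mul]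

lemma Cond5.inner_comm_split_eq_zero (h : Cond5 E β x y) (s t : Qpos) :
    (inner ℂ ((TensorProduct.comm ℂ (E t) (E s)) (β t s (y (t + s)))) (β s t (y (s + t))) : ℂ)
      = 0 := by
  rw [h.2.2.2.2, h.2.2.2.2, TensorProduct.comm_tmul, inner_tmul, h.2.2.1 t, mul_zero]

lemma inner_comm_split_eq_zero_of_cond45 (h45 : Cond4 E β x y ∨ Cond5 E β x y) {r s t : Qpos}
    (hst : s + t = r) :
    (inner ℂ ((TensorProduct.comm ℂ (E t) (E s))
        (β t s (castE E ((add_comm t s).trans hst).symm (y r))))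
      (β s t (castE E hst.symm (y r))) : ℂ) = 0 := by
  rw [castE_apply E y, castE_apply E y]
  exact h45.elim (·.inner_comm_split_eq_zero s t) (·.inner_comm_split_eq_zero s t)

lemma norm_eq_one_of_cond45 (h45 : Cond4 E β x y ∨ Cond5 E β x y) (t : Qpos) : ‖y t‖ = 1 :=
  h45.elim (·.2.1 t) (·.2.1 t)

end Conditions

/-- **Corollary 4.3 (computation).** Under Condition (4) or (5), for `h = y₁` one has
`‖h‖ = 1` while `⟨β_{t,1-t} h, ξ_{1-t,t} β_{1-t,t} h⟩ = 0` for all rational `t ∈ (0,1)`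
(expressed below with the arguments of the inner product exchanged, matching Mathlib's
convention); hence the corresponding function on `ℚ ∩ [0,1]`, with value `‖h‖²` at the
endpoints, is not uniformly continuous. -/
theorem statement15
    (E : Qpos → Type*) [∀ t, NormedAddCommGroup (E t)] [∀ t, InnerProductSpace ℂ (E t)]
    (β : ∀ s t : Qpos, E (s + t) →ₗᵢ[ℂ] (E s ⊗[ℂ] E t))
    (x y : ∀ t : Qpos, E t) (h45 : Cond4 E β x y ∨ Cond5 E β x y) :
    ‖y 1‖ = 1 ∧
    (∀ s t : Qpos, ∀ hst : s + t = 1,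
      (inner ℂ
        ((TensorProduct.comm ℂ (E t) (E s))
          (β t s (castE E (by rw [add_comm t s]; exact hst.symm) (y 1))))
        (β s t (castE E hst.symm (y 1))) : ℂ) = 0) ∧
    ¬ UniformContinuousOn (flipInnerFn E β (y 1)) (Set.Icc (0 : ℚ) 1) := by
  have hy : ‖y 1‖ = 1 := norm_eq_one_of_cond45 h45 1
  refine ⟨hy, fun s t hst => inner_comm_split_eq_zero_of_cond45 h45 hst, fun hunif => ?_⟩
  refine not_continuousWithinAt_Icc_of_eqOn_Ioo (c := 0) zero_lt_one ?_ ?_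
    (hunif.continuousOn 0 ⟨le_rfl, zero_le_one⟩)
  · simp [flipInnerFn, hy]
  · rintro q ⟨hq0, hq1⟩
    rw [flipInnerFn, dif_pos ⟨hq0, hq1⟩]
    exact inner_comm_split_eq_zero_of_cond45 h45 (Subtype.ext (by simp))

end SubprodHilbert
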